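/- arXiv:1904.05549 — 3 statements merged into one kernel-verified Lean document; each statement's English description precedes it below -/
import Mathlib

section
/- Let n ≥ 2 and let σ_1,…,σ_n, μ_1,…,μ_n be nonnegative real numbers with (σ_1,…,σ_n) ≠ (0,…,0), satisfying the A_n Pohozaev identity Σ_{i=1}^n σ_i² - Σ_{i=1}^{n-1} σ_i σ_{i+1} = Σ_{i=1}^n μ_i σ_i. Then there exists an index i ∈ {1,…,n} with σ_i ≥ μ_i. -/
open Finset

theorem pohozaev_An_exists_index (n : ℕ) (hn : 2 ≤ n) (σ μ : ℕ → ℝ)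
    (hσ : ∀ i ∈ Icc 1 n, 0 ≤ σ i) (hμ : ∀ i ∈ Icc 1 n, 0 ≤ μ i)
    (hne : ∃ i ∈ Icc 1 n, σ i ≠ 0)
    (hpoho : (∑ i ∈ Icc 1 n, (σ i) ^ 2) - ∑ i ∈ Icc 1 (n - 1), σ i * σ (i + 1)
      = ∑ i ∈ Icc 1 n, μ i * σ i) :
    ∃ i ∈ Icc 1 n, μ i ≤ σ i := by
  by_contra h
  push_neg at h
  obtain ⟨j, hj, hjne⟩ := hne
  have hjpos : 0 < σ j := lt_of_le_of_ne (hσ j hj) (Ne.symm hjne)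
  have hlt : (∑ i ∈ Icc 1 n, (σ i) ^ 2) < ∑ i ∈ Icc 1 n, μ i * σ i := by
    apply Finset.sum_lt_sum
    · intro i hi
      have h1 := hσ i hi
      have h2 := h i hi
      nlinarith
    · exact ⟨j, hj, by nlinarith [h j hj]⟩
  have hnn : 0 ≤ ∑ i ∈ Icc 1 (n - 1), σ i * σ (i + 1) := by
    apply Finset.sum_nonneg
    intro i hi
    simp only [Finset.mem_Icc] at hi
    have h1 : σ i ≥ 0 := hσ i (Finset.mem_Icc.mpr ⟨hi.1, by omega⟩)
    have h2 : σ (i + 1) ≥ 0 := hσ (i + 1) (Finset.mem_Icc.mpr ⟨by omega, by omega⟩)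
    positivity
  linarith
end

section
/- Let n ≥ 2 and σ_1,…,σ_n, μ_1,…,μ_n be nonnegative reals, not all σ_i zero, satisfying the B_n Pohozaev identity Σ_{i=1}^{n-1} σ_i² + 2σ_n² - Σ_{i=1}^{n-2} σ_i σ_{i+1} - 2σ_{n-1}σ_n = Σ_{i=1}^{n-1} μ_i σ_i + 2μ_n σ_n. Then there exists i with σ_i ≥ μ_i. -/
open Finset

theorem pohozaev_Bn_exists_index (n : ℕ) (hn : 2 ≤ n) (σ μ : ℕ → ℝ)
    (hσ : ∀ i ∈ Icc 1 n, 0 ≤ σ i) (hμ : ∀ i ∈ Icc 1 n, 0 ≤ μ i)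
    (hne : ∃ i ∈ Icc 1 n, σ i ≠ 0)
    (hpoho : (∑ i ∈ Icc 1 (n - 1), (σ i) ^ 2) + 2 * (σ n) ^ 2
        - (∑ i ∈ Icc 1 (n - 2), σ i * σ (i + 1)) - 2 * σ (n - 1) * σ n
      = (∑ i ∈ Icc 1 (n - 1), μ i * σ i) + 2 * μ n * σ n) :
    ∃ i ∈ Icc 1 n, μ i ≤ σ i := by
  by_contra hcon
  push_neg at hcon
  obtain ⟨j, hj, hjne⟩ := hne
  have hσj : 0 < σ j := lt_of_le_of_ne (hσ j hj) (Ne.symm hjne)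
  have hmem : ∀ i ∈ Icc 1 (n - 1), i ∈ Icc 1 n := by
    intro i hi; simp only [mem_Icc] at *; omega
  have hC : 0 ≤ ∑ i ∈ Icc 1 (n - 2), σ i * σ (i + 1) := by
    apply Finset.sum_nonneg
    intro i hi
    simp only [mem_Icc] at hi
    exact mul_nonneg (hσ i (by simp only [mem_Icc]; omega))
      (hσ (i + 1) (by simp only [mem_Icc]; omega))
  have hn1 : (n - 1) ∈ Icc 1 n := by simp only [mem_Icc]; omega
  have hnn : n ∈ Icc 1 n := by simp only [mem_Icc]; omega
  have hD : 0 ≤ 2 * σ (n - 1) * σ n :=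
    mul_nonneg (mul_nonneg (by norm_num) (hσ _ hn1)) (hσ _ hnn)
  have hle : ∀ i ∈ Icc 1 (n - 1), σ i ^ 2 ≤ μ i * σ i := by
    intro i hi
    have := hcon i (hmem i hi)
    have := hσ i (hmem i hi)
    nlinarith
  have hn2 : σ n ^ 2 ≤ μ n * σ n := by
    have := hcon n hnn; have := hσ n hnn; nlinarith
  have key : (∑ i ∈ Icc 1 (n - 1), σ i ^ 2) + 2 * σ n ^ 2
      < (∑ i ∈ Icc 1 (n - 1), μ i * σ i) + 2 * μ n * σ n := by
    simp only [mem_Icc] at hj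
    rcases eq_or_lt_of_le hj.2 with hjn | hjn
    · -- j = n, strict in the extra term
      subst hjn
      have h1 : σ j ^ 2 < μ j * σ j := by
        have := hcon j hnn; nlinarith
      have h2 : (∑ i ∈ Icc 1 (j - 1), σ i ^ 2) ≤ ∑ i ∈ Icc 1 (j - 1), μ i * σ i :=
        Finset.sum_le_sum hle
      nlinarith
    · -- j ≤ n - 1, strict inside the sum
      have hjmem : j ∈ Icc 1 (n - 1) := by simp only [mem_Icc]; omega
      have h1 : (∑ i ∈ Icc 1 (n - 1), σ i ^ 2) < ∑ i ∈ Icc 1 (n - 1), μ i * σ i := by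
        apply Finset.sum_lt_sum hle ⟨j, hjmem, ?_⟩
        nlinarith [hcon j (hmem j hjmem)]
      nlinarith
  linarith
end

section
/- Let σ_1,…,σ_4, μ_1,…,μ_4 be nonnegative reals, not all σ_i zero, satisfying the F_4 Pohozaev identity σ_1² + σ_2² + 2σ_3² + 2σ_4² - σ_1σ_2 - 2σ_2σ_3 - 2σ_3σ_4 = μ_1σ_1 + μ_2σ_2 + 2μ_3σ_3 + 2μ_4σ_4. Then there exists i ∈ {1,2,3,4} with σ_i ≥ μ_i. -/
theorem pohozaev_F4_exists_index (σ₁ σ₂ σ₃ σ₄ μ₁ μ₂ μ₃ μ₄ : ℝ)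
    (hσ₁ : 0 ≤ σ₁) (hσ₂ : 0 ≤ σ₂) (hσ₃ : 0 ≤ σ₃) (hσ₄ : 0 ≤ σ₄)
    (hμ₁ : 0 ≤ μ₁) (hμ₂ : 0 ≤ μ₂) (hμ₃ : 0 ≤ μ₃) (hμ₄ : 0 ≤ μ₄)
    (hne : ¬(σ₁ = 0 ∧ σ₂ = 0 ∧ σ₃ = 0 ∧ σ₄ = 0))
    (hpoho : σ₁ ^ 2 + σ₂ ^ 2 + 2 * σ₃ ^ 2 + 2 * σ₄ ^ 2
        - σ₁ * σ₂ - 2 * σ₂ * σ₃ - 2 * σ₃ * σ₄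
      = μ₁ * σ₁ + μ₂ * σ₂ + 2 * μ₃ * σ₃ + 2 * μ₄ * σ₄) :
    μ₁ ≤ σ₁ ∨ μ₂ ≤ σ₂ ∨ μ₃ ≤ σ₃ ∨ μ₄ ≤ σ₄ := by
  by_contra h
  push_neg at h
  obtain ⟨h1, h2, h3, h4⟩ := h
  have p1 : 0 < σ₁ ∨ 0 < σ₂ ∨ 0 < σ₃ ∨ 0 < σ₄ := by
    rcases hσ₁.lt_or_eq with h | h
    · exact Or.inl h
    rcases hσ₂.lt_or_eq with h' | h'
    · exact Or.inr (Or.inl h')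
    rcases hσ₃.lt_or_eq with h'' | h''
    · exact Or.inr (Or.inr (Or.inl h''))
    rcases hσ₄.lt_or_eq with h''' | h'''
    · exact Or.inr (Or.inr (Or.inr h'''))
    exact absurd ⟨h.symm, h'.symm, h''.symm, h'''.symm⟩ hne
  rcases p1 with hp | hp | hp | hp <;>
    nlinarith [mul_nonneg hσ₁ hσ₂, mul_nonneg hσ₂ hσ₃, mul_nonneg hσ₃ hσ₄,
      mul_nonneg (sub_nonneg.2 h1.le) hσ₁, mul_nonneg (sub_nonneg.2 h2.le) hσ₂,
      mul_nonneg (sub_nonneg.2 h3.le) hσ₃, mul_nonneg (sub_nonneg.2 h4.le) hσ₄,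
      mul_pos (sub_pos.2 h1) hp, mul_pos (sub_pos.2 h2) hp,
      mul_pos (sub_pos.2 h3) hp, mul_pos (sub_pos.2 h4) hp]
end
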